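/- arXiv:1810.10940 — 2 statements merged into one kernel-verified Lean document; each statement's English description precedes it below -/
import Mathlib

section
/- Let G = (V,E) be a graph and H ⊆ V a set of vertices such that α(G[H]) = α(G[N[H]]), where N[H] is the closed neighbourhood of H. Then α(G[V \ N[H]]) = α(G) - α(G[H]). -/
/-- A set of vertices is independent if no two of its members are adjacent. -/
def IsIndepSet {V : Type*} (G : SimpleGraph V) (s : Set V) : Prop :=
  s.Pairwise fun a b => ¬ G.Adj a b

/-- The independence number: the largest cardinality of an independent set. -/
noncomputable def indepNum {V : Type*} (G : SimpleGraph V) : ℕ :=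
  sSup {n | ∃ s : Finset V, IsIndepSet G ↑s ∧ s.card = n}

/-! Write `N = N[H]`. Splitting a maximum independent set of `G` along `N` gives
`α(G) ≤ α(G[N]) + α(G[V \ N])`. Conversely, no vertex outside `N` is adjacent to `H`, so an
independent set of `G[H]` together with one of `G[V \ N]` is independent in `G`, giving
`α(G[H]) + α(G[V \ N]) ≤ α(G)`. The hypothesis `α(G[H]) = α(G[N])` makes the two bounds
meet. -/

theorem indepNum_eq_simpleGraph_indepNum {V : Type*} (G : SimpleGraph V) :
    indepNum G = G.indepNum := by
  simp only [indepNum, SimpleGraph.indepNum, SimpleGraph.isNIndepSet_iff]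
  rfl

namespace SimpleGraph

open Finset

variable {V : Type*} {G : SimpleGraph V}

theorem isIndepSet_induce_iff {A : Set V} {t : Set A} :
    (G.induce A).IsIndepSet t ↔ G.IsIndepSet (Subtype.val '' t) := by
  simp [Set.Pairwise]

theorem IsIndepSet.card_le_indepNum_induce [Finite V] {A : Set V} {s : Finset V}
    (hs : G.IsIndepSet s) (hsA : ↑s ⊆ A) : #s ≤ (G.induce A).indepNum := by
  classical
  let t : Finset A := s.subtype (· ∈ A)
  have ht : Subtype.val '' (t : Set A) = s := by
    ext v
    simpa [t] using fun hv => hsA hv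
  have hcard : #t = #s := by
    rw [card_subtype]
    exact congrArg card (filter_true_of_mem fun v hv => hsA hv)
  rw [← hcard]
  exact (isIndepSet_induce_iff.mpr (ht ▸ hs)).card_le_indepNum

theorem exists_isIndepSet_subset_card_eq_indepNum_induce (A : Set V) :
    ∃ s : Finset V, ↑s ⊆ A ∧ G.IsIndepSet s ∧ #s = (G.induce A).indepNum := by
  obtain ⟨t, ht, hcard⟩ := (G.induce A).exists_isNIndepSet_indepNum
  refine ⟨t.map (Function.Embedding.subtype _), ?_, ?_, by rw [card_map, hcard]⟩
  · simp
  · simpa using isIndepSet_induce_iff.mp ht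

theorem indepNum_le_indepNum_induce_add_indepNum_induce_compl [Finite V] (A : Set V) :
    G.indepNum ≤ (G.induce A).indepNum + (G.induce Aᶜ).indepNum := by
  classical
  obtain ⟨s, hs⟩ := G.exists_isNIndepSet_indepNum
  rw [← hs.card_eq, ← card_filter_add_card_filter_not (· ∈ A)]
  gcongr
  all_goals
    exact IsIndepSet.card_le_indepNum_induce
      (hs.isIndepSet.mono (coe_subset.mpr (filter_subset _ _))) fun v hv => (mem_filter.mp hv).2

theorem indepNum_induce_add_indepNum_induce_le [Finite V] {A B : Set V} (hAB : Disjoint A B)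
    (hnadj : ∀ a ∈ A, ∀ b ∈ B, ¬ G.Adj a b) :
    (G.induce A).indepNum + (G.induce B).indepNum ≤ G.indepNum := by
  classical
  obtain ⟨s, hsA, hs, hs_card⟩ := G.exists_isIndepSet_subset_card_eq_indepNum_induce A
  obtain ⟨t, htB, ht, ht_card⟩ := G.exists_isIndepSet_subset_card_eq_indepNum_induce B
  have hunion : G.IsIndepSet ↑(s ∪ t) := by
    rw [coe_union, isIndepSet_iff, Set.pairwise_union]
    exact ⟨hs, ht, fun a ha b hb _ =>
      ⟨hnadj a (hsA ha) b (htB hb), fun hba => hnadj a (hsA ha) b (htB hb) hba.symm⟩⟩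
  rw [← hs_card, ← ht_card, ← card_union_of_disjoint (disjoint_coe.mp (hAB.mono hsA htB))]
  exact hunion.card_le_indepNum

end SimpleGraph

/-- Total struction / `H`-subgraph reduction: if `α(G[H]) = α(G[N[H]])`, then
`α(G[V \ N[H]]) = α(G) - α(G[H])`. -/
theorem H_subgraph_reduction {V : Type*} [Fintype V] (G : SimpleGraph V) (H : Set V)
    (hα : indepNum (G.induce H) =
      indepNum (G.induce (H ∪ {v | ∃ h ∈ H, G.Adj v h}))) :
    indepNum (G.induce (H ∪ {v | ∃ h ∈ H, G.Adj v h})ᶜ) =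
      indepNum G - indepNum (G.induce H) := by
  set N := H ∪ {v | ∃ h ∈ H, G.Adj v h}
  simp only [indepNum_eq_simpleGraph_indepNum] at hα ⊢
  have hsplit := G.indepNum_le_indepNum_induce_add_indepNum_induce_compl N
  have hcombine : (G.induce H).indepNum + (G.induce Nᶜ).indepNum ≤ G.indepNum :=
    G.indepNum_induce_add_indepNum_induce_le (disjoint_compl_right.mono_left Set.subset_union_left)
      fun h hh v hv hadj => hv (Or.inr ⟨h, hh, hadj.symm⟩)
  omega
end

section
/- Let G be a subcubic graph containing an induced subgraph isomorphic to A1 (a 6-cycle 1,2,3,4,5,6 plus adjacent vertices x,y with y adjacent to 2,5 and x adjacent to 3,6), such that all vertices of A1 except possibly 1 and 4 have no neighbours outside A1. Then α(G - V(A1)) = α(G) - 3. -/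
/-- Adjacency of the graph `A₁`: a 6-cycle on vertices `1,…,6` (indices `0,…,5`)
plus adjacent vertices `x` (index `6`) and `y` (index `7`), with `y` adjacent to
`2,5` and `x` adjacent to `3,6`. -/
def a1Adj (i j : Fin 8) : Prop :=
  ((i, j) ∈ ([(5,0),(0,1),(1,2),(2,3),(3,4),(4,5),(1,7),(7,4),(2,6),(6,5),(6,7)] :
      List (Fin 8 × Fin 8))) ∨
  ((j, i) ∈ ([(5,0),(0,1),(1,2),(2,3),(3,4),(4,5),(1,7),(7,4),(2,6),(6,5),(6,7)] :
      List (Fin 8 × Fin 8)))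

instance : DecidableRel a1Adj := fun i j => by unfold a1Adj; infer_instance

lemma a1_key : ∀ s : Finset (Fin 8), (∀ i ∈ s, ∀ j ∈ s, i ≠ j → ¬ a1Adj i j) → s.card ≤ 3 := by
  set_option maxRecDepth 10000 in decide

lemma a1_146 : ¬ a1Adj 1 4 ∧ ¬ a1Adj 1 6 ∧ ¬ a1Adj 4 6 ∧ ¬ a1Adj 4 1 ∧ ¬ a1Adj 6 1 ∧
    ¬ a1Adj 6 4 := by set_option maxRecDepth 10000 in decide

lemma indepNum_bddAbove {V : Type*} [Fintype V] (G : SimpleGraph V) :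
    BddAbove {n | ∃ s : Finset V, IsIndepSet G ↑s ∧ s.card = n} := by
  refine ⟨Fintype.card V, fun n hn => ?_⟩
  obtain ⟨s, -, rfl⟩ := hn
  exact s.card_le_univ.trans_eq (Finset.card_univ)

lemma indepNum_exists {V : Type*} [Fintype V] (G : SimpleGraph V) :
    ∃ s : Finset V, IsIndepSet G ↑s ∧ s.card = indepNum G := by
  have hne : {n | ∃ s : Finset V, IsIndepSet G ↑s ∧ s.card = n}.Nonempty :=
    ⟨0, ∅, by simp [IsIndepSet], rfl⟩
  exact Nat.sSup_mem hne (indepNum_bddAbove G)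

lemma le_indepNum {V : Type*} [Fintype V] (G : SimpleGraph V) (s : Finset V)
    (h : IsIndepSet G ↑s) : s.card ≤ indepNum G :=
  le_csSup (indepNum_bddAbove G) ⟨s, h, rfl⟩

/-- `A₁`-subgraph reduction: if a subcubic graph `G` has an induced copy of `A₁` in
which all vertices except possibly `1` and `4` (indices `0` and `3`) have no
neighbours outside the copy, then deleting the copy decreases the independence
number by exactly 3. -/
theorem A1_subgraph_reduction {V : Type*} [Fintype V] (G : SimpleGraph V)
    [DecidableRel G.Adj] (hdeg : ∀ v, G.degree v ≤ 3)
    (f : Fin 8 → V) (hf : Function.Injective f)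
    (hind : ∀ i j, G.Adj (f i) (f j) ↔ a1Adj i j)
    (hout : ∀ i : Fin 8, i ≠ 0 → i ≠ 3 → ∀ v, G.Adj (f i) v → ∃ j, v = f j) :
    indepNum (G.induce {v | ∀ i, v ≠ f i}) = indepNum G - 3 := by
  classical
  set P : Set V := {v | ∀ i, v ≠ f i} with hP
  haveI : Fintype P := Fintype.ofFinite _
  -- Direction 1 : indepNum G ≥ indepNum induced + 3
  have h1 : indepNum (G.induce P) + 3 ≤ indepNum G := by
    obtain ⟨s, hs, hcard⟩ := indepNum_exists (G.induce P)
    set s' : Finset V := s.map ⟨Subtype.val, Subtype.val_injective⟩ with hs'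
    have hmem : ∀ v ∈ s', ∀ i, v ≠ f i := by
      intro v hv
      obtain ⟨⟨w, hw⟩, -, rfl⟩ := Finset.mem_map.mp hv
      exact hw
    set T : Finset V := {f 1, f 4, f 6} with hT
    have hdisj : Disjoint s' T := by
      rw [Finset.disjoint_right]
      intro v hv hv'
      rw [hT, Finset.mem_insert, Finset.mem_insert, Finset.mem_singleton] at hv
      rcases hv with rfl | rfl | rfl <;> exact hmem _ hv' _ rfl
    have hTcard : T.card = 3 := by
      rw [hT]
      rw [Finset.card_insert_of_notMem, Finset.card_insert_of_notMem,
        Finset.card_singleton]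
      · simp only [Finset.mem_singleton]
        exact fun h => by exact absurd (hf h) (by decide)
      · simp only [Finset.mem_insert, Finset.mem_singleton]
        rintro (h | h) <;> exact absurd (hf h) (by decide)
    have hindep : IsIndepSet G ↑(s' ∪ T) := by
      intro a ha b hb hab hAdj
      simp only [Finset.coe_union, Set.mem_union, Finset.mem_coe] at ha hb
      obtain ⟨h14, h16, h46, h41, h61, h64⟩ := a1_146
      have hTT : ∀ x ∈ T, ∀ y ∈ T, ¬ G.Adj x y := by
        intro x hx y hy
        rw [hT, Finset.mem_insert, Finset.mem_insert, Finset.mem_singleton] at hx hy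
        rcases hx with rfl | rfl | rfl <;> rcases hy with rfl | rfl | rfl <;>
          first
            | exact G.irrefl
            | (rw [hind]; assumption)
      have hmix : ∀ x ∈ T, ∀ y ∈ s', ¬ G.Adj x y := by
        intro x hx y hy hxy
        have : ∃ i : Fin 8, i ≠ 0 ∧ i ≠ 3 ∧ x = f i := by
          rw [hT, Finset.mem_insert, Finset.mem_insert, Finset.mem_singleton] at hx
          rcases hx with rfl | rfl | rfl
          · exact ⟨1, by decide, by decide, rfl⟩
          · exact ⟨4, by decide, by decide, rfl⟩
          · exact ⟨6, by decide, by decide, rfl⟩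
        obtain ⟨i, hi0, hi3, rfl⟩ := this
        obtain ⟨j, rfl⟩ := hout i hi0 hi3 y hxy
        exact hmem _ hy j rfl
      rcases ha with ha | ha <;> rcases hb with hb | hb
      · -- both in s'
        obtain ⟨⟨a', ha'⟩, has, rfl⟩ := Finset.mem_map.mp ha
        obtain ⟨⟨b', hb'⟩, hbs, rfl⟩ := Finset.mem_map.mp hb
        exact hs (Finset.mem_coe.mpr has) (Finset.mem_coe.mpr hbs)
          (fun h => hab (congrArg Subtype.val h)) hAdj
      · exact hmix b hb a ha hAdj.symm
      · exact hmix a ha b hb hAdj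
      · exact hTT a ha b hb hAdj
    have := le_indepNum G (s' ∪ T) hindep
    rwa [Finset.card_union_of_disjoint hdisj, Finset.card_map, hcard, hTcard] at this
  -- Direction 2 : indepNum G ≤ indepNum induced + 3
  have h2 : indepNum G ≤ indepNum (G.induce P) + 3 := by
    obtain ⟨t, ht, hcard⟩ := indepNum_exists G
    set p : V → Prop := fun v => ∀ i, v ≠ f i with hp
    set t' : Finset V := t.filter p with ht'
    -- the indices of A₁-vertices in t
    set u : Finset (Fin 8) := Finset.univ.filter (fun i => f i ∈ t) with hu
    have hucard : u.card ≤ 3 := by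
      apply a1_key
      intro i hi j hj hij hadj
      rw [hu, Finset.mem_filter] at hi hj
      exact ht hi.2 hj.2 (fun h => hij (hf h)) ((hind i j).mpr hadj)
    have hsplit : (t.filter p).card + (t.filter (fun v => ¬ p v)).card = t.card :=
      Finset.card_filter_add_card_filter_not _
    have hnp : (t.filter (fun v => ¬ p v)).card ≤ 3 := by
      refine le_trans ?_ hucard
      have hsub : t.filter (fun v => ¬ p v) ⊆ u.image f := by
        intro v hv
        rw [Finset.mem_filter] at hv
        simp only [hp, not_forall, not_not] at hv
        obtain ⟨hvt, i, hi⟩ := hv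
        refine Finset.mem_image.mpr ⟨i, ?_, hi.symm⟩
        rw [hu, Finset.mem_filter]
        exact ⟨Finset.mem_univ i, hi ▸ hvt⟩
      calc (t.filter (fun v => ¬ p v)).card ≤ (u.image f).card := Finset.card_le_card hsub
        _ ≤ u.card := Finset.card_image_le
    -- t' embeds into the induced graph
    set s : Finset P := t'.subtype (· ∈ P) with hsdef
    have hscard : s.card = t'.card := by
      rw [hsdef, Finset.card_subtype, Finset.filter_true_of_mem]
      intro v hv
      rw [ht', Finset.mem_filter] at hv
      exact hv.2
    have hsindep : IsIndepSet (G.induce P) ↑s := by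
      intro a ha b hb hab hAdj
      have ha' : (a : V) ∈ t' := (Finset.mem_subtype.mp (Finset.mem_coe.mp ha))
      have hb' : (b : V) ∈ t' := (Finset.mem_subtype.mp (Finset.mem_coe.mp hb))
      rw [ht', Finset.mem_filter] at ha' hb'
      exact ht ha'.1 hb'.1 (fun h => hab (Subtype.ext h)) hAdj
    have hle := le_indepNum (G.induce P) s hsindep
    have hteq : t'.card = (t.filter p).card := rfl
    omega
  -- finish
  omega
end
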